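/- First part of the Corollary to Theorem 2: if the marginal distribution of G is equal between the two populations, i.e. P(G=g|S=1) = P(G=g|S=2) for all g ∈ {0,…,g_max}, then φ₁ − φ₂ = Σ_{g=0}^{g_max} Cov( τ(g), υ(g) ), where υ(g) := P(G=g|S=1,𝓗) − P(G=g|S=2,𝓗) and the covariance is unconditional. -/

import Mathlib

/-!
Since `S` is independent of `𝓗`, conditioning on `S = s` leaves `P` unchanged on `𝓗`; hence
`P(S = s, G = g | 𝓗) = P(S = s) · P(G = g | S = s, 𝓗)` and
`E[P(G = g | S = s, 𝓗)] = P(G = g | S = s)`.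
Conditional independence of `Y^(a,g)` and `(S, G)` given `𝓗` gives
`E[Y^(a,g) · 1{S = s, G = g}] = E[Y^(a,g) · P(S = s, G = g | 𝓗)]`, so
`φ_s = Σ_g E[τ(g) · P(G = g | S = s, 𝓗)]` and `φ₁ − φ₂ = Σ_g E[τ(g) · υ(g)]`.
With equal marginals `E[υ(g)] = 0`, so each summand is `Cov(τ(g), υ(g))`.
-/

open MeasureTheory ProbabilityTheory Set

/-- The indicator function of a set, as a real-valued random variable. -/
noncomputable def ind {Ω : Type*} (s : Set Ω) : Ω → ℝ := s.indicator fun _ => 1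

/-- The covariance of two real random variables, `Cov(f,g) = E[f·g] − E[f]·E[g]`. -/
noncomputable def cov {Ω : Type*} {m : MeasurableSpace Ω} (μ : MeasureTheory.Measure Ω)
    (f g : Ω → ℝ) : ℝ :=
  (∫ ω, f ω * g ω ∂μ) - (∫ ω, f ω ∂μ) * ∫ ω, g ω ∂μ

lemma ind_mul_eq_indicator {Ω : Type*} (s : Set Ω) (f : Ω → ℝ) (ω : Ω) :
    ind s ω * f ω = s.indicator f ω := by
  by_cases h : ω ∈ s <;> simp [ind, h]

lemma cov_sub_eq_integral_mul_sub_integral_mul {Ω : Type*} {m : MeasurableSpace Ω}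
    {μ : Measure Ω} {f p q : Ω → ℝ} (hp : Integrable p μ) (hq : Integrable q μ)
    (hfp : Integrable (fun ω => f ω * p ω) μ) (hfq : Integrable (fun ω => f ω * q ω) μ)
    (hpq : ∫ ω, p ω ∂μ = ∫ ω, q ω ∂μ) :
    cov μ f (fun ω => p ω - q ω) = ∫ ω, f ω * p ω ∂μ - ∫ ω, f ω * q ω ∂μ := by
  rw [cov, integral_sub hp hq, hpq, sub_self, mul_zero, sub_zero, ← integral_sub hfp hfq]
  simp_rw [mul_sub]

lemma norm_le_one_of_mem_Icc {x : ℝ} (hx : x ∈ Icc 0 1) : ‖x‖ ≤ 1 := by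
  rw [Real.norm_eq_abs, abs_le]
  exact ⟨by linarith [hx.1], hx.2⟩

namespace ProbabilityTheory

variable {Ω : Type*} {m m' : MeasurableSpace Ω} [mΩ : MeasurableSpace Ω] {μ : Measure Ω}
  {E F : Set Ω}

lemma _root_.MeasureTheory.Integrable.cond {f : Ω → ℝ} (hf : Integrable f μ) :
    Integrable f μ[|E] := by
  by_cases hE : μ E = 0
  · simp [cond_eq_zero_of_meas_eq_zero hE]
  · exact hf.restrict.smul_measure (ENNReal.inv_ne_top.mpr hE)

lemma integral_cond_eq_inv_mul_integral_indicator (hE : MeasurableSet E) (f : Ω → ℝ) :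
    ∫ ω, f ω ∂μ[|E] = (μ.real E)⁻¹ * ∫ ω, E.indicator f ω ∂μ := by
  rw [cond, integral_smul_measure, integral_indicator hE, smul_eq_mul, ENNReal.toReal_inv,
    measureReal_def]

lemma condExp_indicator_mem_Icc [IsFiniteMeasure μ] (hm : m ≤ mΩ) (hF : MeasurableSet F) :
    ∀ᵐ ω ∂μ, (μ⟦F | m⟧) ω ∈ Icc 0 1 := by
  have h_nonneg : 0 ≤ᵐ[μ] μ⟦F | m⟧ :=
    condExp_nonneg (.of_forall fun ω => indicator_nonneg (fun _ _ => zero_le_one) ω)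
  have h_le_one : μ⟦F | m⟧ ≤ᵐ[μ] μ[fun _ => (1 : ℝ) | m] :=
    condExp_mono ((integrable_const 1).indicator hF) (integrable_const 1)
      (.of_forall fun ω => indicator_le_self' (fun _ _ => zero_le_one) ω)
  rw [condExp_const hm] at h_le_one
  filter_upwards [h_nonneg, h_le_one] with ω h0 h1 using ⟨h0, h1⟩

lemma integral_condExp_indicator_mul [IsFiniteMeasure μ] (hm : m ≤ mΩ) {p : Ω → ℝ}
    (hp : StronglyMeasurable[m] p) {c : ℝ} (hpc : ∀ᵐ ω ∂μ, ‖p ω‖ ≤ c) (hF : MeasurableSet F) :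
    ∫ ω, (μ⟦F | m⟧) ω * p ω ∂μ = ∫ ω in F, p ω ∂μ := by
  have h_pull := condExp_stronglyMeasurable_mul_of_bound hm hp
    ((integrable_const (1 : ℝ)).indicator hF) c hpc
  calc ∫ ω, (μ⟦F | m⟧) ω * p ω ∂μ = ∫ ω, (μ[p * F.indicator (fun _ => 1) | m]) ω ∂μ := by
        refine integral_congr_ae ?_
        filter_upwards [h_pull] with ω h
        rw [h, Pi.mul_apply, mul_comm]
    _ = ∫ ω, (p * F.indicator fun _ => (1 : ℝ)) ω ∂μ := integral_condExp hm
    _ = ∫ ω in F, p ω ∂μ := by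
        rw [← integral_indicator hF]
        congr 1 with ω
        by_cases h : ω ∈ F <;> simp [h]

section CondIndepFun

variable [StandardBorelSpace Ω] [IsFiniteMeasure μ] {β γ : Type*} [MeasurableSpace β]
  [MeasurableSpace γ] {g : Ω → γ} {t : Set γ}

lemma CondIndepFun.measureReal_inter_preimage_eq_setIntegral_condExp (hm : m ≤ mΩ)
    {f : Ω → β} (hf : Measurable f) (hg : Measurable g) (hfg : CondIndepFun m hm f g μ)
    {s : Set β} (hs : MeasurableSet s) (ht : MeasurableSet t) :
    μ.real (f ⁻¹' s ∩ g ⁻¹' t) = ∫ ω in f ⁻¹' s, (μ⟦g ⁻¹' t | m⟧) ω ∂μ :=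
  calc μ.real (f ⁻¹' s ∩ g ⁻¹' t) = ∫ ω, (μ⟦f ⁻¹' s ∩ g ⁻¹' t | m⟧) ω ∂μ := by
        rw [integral_condExp hm]
        exact (integral_indicator_one ((hf hs).inter (hg ht))).symm
    _ = ∫ ω, (μ⟦f ⁻¹' s | m⟧) ω * (μ⟦g ⁻¹' t | m⟧) ω ∂μ :=
        integral_congr_ae ((condIndepFun_iff_condExp_inter_preimage_eq_mul hf hg).mp hfg s t hs ht)
    _ = ∫ ω in f ⁻¹' s, (μ⟦g ⁻¹' t | m⟧) ω ∂μ :=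
        integral_condExp_indicator_mul hm stronglyMeasurable_condExp
          ((condExp_indicator_mem_Icc hm (hg ht)).mono fun _ => norm_le_one_of_mem_Icc) (hf hs)

lemma CondIndepFun.integral_indicator_eq_integral_mul_condExp (hm : m ≤ mΩ) {f : Ω → ℝ}
    (hf : Measurable f) (hg : Measurable g) (hfg : CondIndepFun m hm f g μ)
    (ht : MeasurableSet t) :
    ∫ ω, (g ⁻¹' t).indicator f ω ∂μ = ∫ ω, f ω * (μ⟦g ⁻¹' t | m⟧) ω ∂μ := by
  set q := μ⟦g ⁻¹' t | m⟧
  have hq : ∀ᵐ ω ∂μ, q ω ∈ Icc 0 1 := condExp_indicator_mem_Icc hm (hg ht)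
  have hq_meas : Measurable q := (stronglyMeasurable_condExp.mono hm).measurable
  -- Reduce to equality of the laws of `f`; on preimages `f ⁻¹' s` this is the previous lemma.
  have h_map : (μ.restrict (g ⁻¹' t)).map f
      = (μ.withDensity fun ω => ENNReal.ofReal (q ω)).map f := by
    refine Measure.ext fun s hs => ?_
    rw [Measure.map_apply hf hs, Measure.map_apply hf hs, Measure.restrict_apply (hf hs),
      withDensity_apply _ (hf hs), ← ofReal_integral_eq_lintegral_ofReal
        integrable_condExp.integrableOn (ae_restrict_of_ae (hq.mono fun _ h => h.1)),
      ← hfg.measureReal_inter_preimage_eq_setIntegral_condExp hm hf hg hs ht,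
      ofReal_measureReal]
  calc ∫ ω, (g ⁻¹' t).indicator f ω ∂μ = ∫ x, x ∂(μ.restrict (g ⁻¹' t)).map f := by
        rw [integral_indicator (hg ht),
          integral_map (f := fun x : ℝ => x) hf.aemeasurable aestronglyMeasurable_id]
    _ = ∫ ω, (ENNReal.ofReal (q ω)).toReal • f ω ∂μ := by
        rw [h_map, integral_map (f := fun x : ℝ => x) hf.aemeasurable aestronglyMeasurable_id,
          integral_withDensity_eq_integral_toReal_smul hq_meas.ennreal_ofReal
            (.of_forall fun _ => ENNReal.ofReal_lt_top)]
    _ = ∫ ω, f ω * q ω ∂μ := by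
        refine integral_congr_ae ?_
        filter_upwards [hq] with ω h
        rw [ENNReal.toReal_ofReal h.1, smul_eq_mul, mul_comm]

end CondIndepFun

section IndepConditioning

variable [IsFiniteMeasure μ]

lemma trim_cond_eq_trim_of_indep (hm : m ≤ mΩ) (hind : Indep m' m μ) (hE : MeasurableSet[m'] E)
    (hμE : μ E ≠ 0) : (μ[|E]).trim hm = μ.trim hm := by
  refine @Measure.ext _ m _ _ fun H hH => ?_
  rw [trim_measurableSet_eq hm hH, trim_measurableSet_eq hm hH, cond_apply' (hm H hH),
    (Indep_iff _ _ _).mp hind E H hE hH, ← mul_assoc, ENNReal.inv_mul_cancel hμE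
      (measure_ne_top μ E), one_mul]

lemma setIntegral_cond_eq_of_indep (hm : m ≤ mΩ) (hind : Indep m' m μ) (hE : MeasurableSet[m'] E)
    (hμE : μ E ≠ 0) {f : Ω → ℝ} (hf : StronglyMeasurable[m] f) {H : Set Ω}
    (hH : MeasurableSet[m] H) : ∫ ω in H, f ω ∂μ[|E] = ∫ ω in H, f ω ∂μ := by
  rw [setIntegral_trim hm hf hH, setIntegral_trim hm hf hH,
    trim_cond_eq_trim_of_indep hm hind hE hμE]

lemma ae_of_ae_cond_of_indep (hm : m ≤ mΩ) (hind : Indep m' m μ) (hE : MeasurableSet[m'] E)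
    (hμE : μ E ≠ 0) {p : Ω → Prop} (hp : MeasurableSet[m] {ω | p ω})
    (h : ∀ᵐ ω ∂μ[|E], p ω) : ∀ᵐ ω ∂μ, p ω := by
  rw [ae_iff, ← compl_ofPred] at h ⊢
  rw [← trim_measurableSet_eq hm hp.compl, ← trim_cond_eq_trim_of_indep hm hind hE hμE,
    trim_measurableSet_eq hm hp.compl]
  exact h

lemma condExp_cond_mem_Icc_of_indep (hm : m ≤ mΩ) (hind : Indep m' m μ)
    (hE : MeasurableSet[m'] E) (hμE : μ E ≠ 0) (hF : MeasurableSet F) :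
    ∀ᵐ ω ∂μ, ((μ[|E])⟦F | m⟧) ω ∈ Icc 0 1 :=
  ae_of_ae_cond_of_indep hm hind hE hμE
    (stronglyMeasurable_condExp.measurable measurableSet_Icc) (condExp_indicator_mem_Icc hm hF)

lemma integrable_condExp_cond_of_indep (hm : m ≤ mΩ) (hind : Indep m' m μ)
    (hE : MeasurableSet[m'] E) (hμE : μ E ≠ 0) (hF : MeasurableSet F) :
    Integrable ((μ[|E])⟦F | m⟧) μ :=
  (integrable_const (1 : ℝ)).mono' (stronglyMeasurable_condExp.mono hm).aestronglyMeasurable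
    ((condExp_cond_mem_Icc_of_indep hm hind hE hμE hF).mono fun _ => norm_le_one_of_mem_Icc)

lemma _root_.MeasureTheory.Integrable.mul_condExp_cond_of_indep (hm : m ≤ mΩ) (hind : Indep m' m μ)
    (hE : MeasurableSet[m'] E) (hμE : μ E ≠ 0) (hF : MeasurableSet F) {f : Ω → ℝ}
    (hf : Integrable f μ) : Integrable (fun ω => f ω * ((μ[|E])⟦F | m⟧) ω) μ :=
  hf.mul_bdd (stronglyMeasurable_condExp.mono hm).aestronglyMeasurable
    ((condExp_cond_mem_Icc_of_indep hm hind hE hμE hF).mono fun _ => norm_le_one_of_mem_Icc)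

lemma integral_condExp_cond_eq_of_indep (hm : m ≤ mΩ) (hind : Indep m' m μ)
    (hE : MeasurableSet[m'] E) (hμE : μ E ≠ 0) (hF : MeasurableSet F) :
    ∫ ω, ((μ[|E])⟦F | m⟧) ω ∂μ = (μ[|E]).real F := by
  rw [← setIntegral_univ, ← setIntegral_cond_eq_of_indep hm hind hE hμE stronglyMeasurable_condExp
    MeasurableSet.univ, setIntegral_univ, integral_condExp hm]
  exact integral_indicator_one hF

lemma condExp_inter_ae_eq_measureReal_mul_condExp_cond (hm : m ≤ mΩ) (hind : Indep m' m μ)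
    (hE' : MeasurableSet[m'] E) (hE : MeasurableSet E) (hμE : μ E ≠ 0) (hF : MeasurableSet F) :
    μ⟦E ∩ F | m⟧ =ᵐ[μ] fun ω => μ.real E * ((μ[|E])⟦F | m⟧) ω := by
  set p := (μ[|E])⟦F | m⟧
  have hp : StronglyMeasurable[m] p := stronglyMeasurable_condExp
  have hp_int : Integrable p μ := integrable_condExp_cond_of_indep hm hind hE' hμE hF
  refine (ae_eq_condExp_of_forall_setIntegral_eq hm ((integrable_const 1).indicator (hE.inter hF))
    (fun H _ _ => (hp_int.const_mul _).integrableOn) (fun H hH _ => ?_)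
    (hp.const_mul _).aestronglyMeasurable).symm
  calc ∫ ω in H, μ.real E * p ω ∂μ = μ.real E * ∫ ω in H, p ω ∂μ[|E] := by
        rw [integral_const_mul, setIntegral_cond_eq_of_indep hm hind hE' hμE hp hH]
    _ = μ.real E * (μ[|E]).real (H ∩ F) := by
        rw [setIntegral_condExp hm ((integrable_const 1).indicator hF) hH,
          setIntegral_indicator hF, setIntegral_const, smul_eq_mul, mul_one]
    _ = μ.real (H ∩ (E ∩ F)) := by
        rw [measureReal_def (μ[|E]), cond_apply hE, ENNReal.toReal_mul, ENNReal.toReal_inv,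
          ← measureReal_def, ← mul_assoc,
          mul_inv_cancel₀ ((measureReal_ne_zero_iff).mpr hμE), one_mul, inter_left_comm,
          measureReal_def]
    _ = ∫ ω in H, (E ∩ F).indicator (fun _ => (1 : ℝ)) ω ∂μ := by
        rw [setIntegral_indicator (hE.inter hF), setIntegral_const, smul_eq_mul, mul_one]

end IndepConditioning

section Transport

variable [StandardBorelSpace Ω] [IsFiniteMeasure μ] {β γ : Type*} [MeasurableSpace β]
  [MeasurableSpace γ] {S : Ω → β} {G : Ω → γ} {s : Set β} {t : Set γ}

lemma integral_cond_indicator_eq_integral_mul_condExp_cond (hm : m ≤ mΩ) (hS : Measurable S)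
    (hG : Measurable G) (hind : Indep (MeasurableSpace.comap S inferInstance) m μ)
    (hs : MeasurableSet s) (ht : MeasurableSet t) (hμs : μ (S ⁻¹' s) ≠ 0) {f : Ω → ℝ}
    (hf : Measurable f) (hfSG : CondIndepFun m hm f (fun ω => (S ω, G ω)) μ) :
    ∫ ω, (G ⁻¹' t).indicator f ω ∂μ[|S ⁻¹' s]
      = ∫ ω, f ω * ((μ[|S ⁻¹' s])⟦G ⁻¹' t | m⟧) ω ∂μ := by
  set p := (μ[|S ⁻¹' s])⟦G ⁻¹' t | m⟧
  have hSG : (fun ω => (S ω, G ω)) ⁻¹' (s ×ˢ t) = S ⁻¹' s ∩ G ⁻¹' t := mk_preimage_prod S G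
  have hp : μ⟦S ⁻¹' s ∩ G ⁻¹' t | m⟧ =ᵐ[μ] fun ω => μ.real (S ⁻¹' s) * p ω :=
    condExp_inter_ae_eq_measureReal_mul_condExp_cond hm hind ⟨s, hs, rfl⟩ (hS hs) hμs (hG ht)
  rw [integral_cond_eq_inv_mul_integral_indicator (hS hs), indicator_indicator, ← hSG,
    hfSG.integral_indicator_eq_integral_mul_condExp hm hf (hS.prodMk hG) (hs.prod ht), hSG]
  calc (μ.real (S ⁻¹' s))⁻¹ * ∫ ω, f ω * (μ⟦S ⁻¹' s ∩ G ⁻¹' t | m⟧) ω ∂μ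
      = (μ.real (S ⁻¹' s))⁻¹ * ∫ ω, μ.real (S ⁻¹' s) * (f ω * p ω) ∂μ := by
        congr 1
        refine integral_congr_ae ?_
        filter_upwards [hp] with ω h
        rw [h, mul_left_comm]
    _ = ∫ ω, f ω * p ω ∂μ := by
        rw [integral_const_mul, inv_mul_cancel_left₀ ((measureReal_ne_zero_iff).mpr hμs)]

lemma integral_cond_sum_indicator_sub_eq_sum_integral_sub_mul_condExp_cond
    [MeasurableSingletonClass γ] (hm : m ≤ mΩ) (hS : Measurable S) (hG : Measurable G)
    (hind : Indep (MeasurableSpace.comap S inferInstance) m μ) (hs : MeasurableSet s)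
    (hμs : μ (S ⁻¹' s) ≠ 0) {I : Finset γ} {f₁ f₀ : γ → Ω → ℝ}
    (hf₁ : ∀ g ∈ I, Measurable (f₁ g) ∧ Integrable (f₁ g) μ ∧
      CondIndepFun m hm (f₁ g) (fun ω => (S ω, G ω)) μ)
    (hf₀ : ∀ g ∈ I, Measurable (f₀ g) ∧ Integrable (f₀ g) μ ∧
      CondIndepFun m hm (f₀ g) (fun ω => (S ω, G ω)) μ) :
    ∫ ω, ∑ g ∈ I, ((G ⁻¹' {g}).indicator (f₁ g) ω - (G ⁻¹' {g}).indicator (f₀ g) ω) ∂μ[|S ⁻¹' s]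
      = ∑ g ∈ I, ∫ ω, (f₁ g ω - f₀ g ω) * ((μ[|S ⁻¹' s])⟦G ⁻¹' {g} | m⟧) ω ∂μ := by
  have hGg (g : γ) : MeasurableSet (G ⁻¹' {g}) := hG (measurableSet_singleton g)
  refine (integral_finsetSum I fun g hg => ?_).trans (Finset.sum_congr rfl fun g hg => ?_)
  · exact ((hf₁ g hg).2.1.cond.indicator (hGg g)).sub ((hf₀ g hg).2.1.cond.indicator (hGg g))
  obtain ⟨hf₁m, hf₁i, hf₁SG⟩ := hf₁ g hg
  obtain ⟨hf₀m, hf₀i, hf₀SG⟩ := hf₀ g hg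
  rw [integral_sub (hf₁i.cond.indicator (hGg g)) (hf₀i.cond.indicator (hGg g)),
    integral_cond_indicator_eq_integral_mul_condExp_cond hm hS hG hind hs
      (measurableSet_singleton g) hμs hf₁m hf₁SG,
    integral_cond_indicator_eq_integral_mul_condExp_cond hm hS hG hind hs
      (measurableSet_singleton g) hμs hf₀m hf₀SG,
    ← integral_sub (hf₁i.mul_condExp_cond_of_indep hm hind ⟨s, hs, rfl⟩ hμs (hGg g))
      (hf₀i.mul_condExp_cond_of_indep hm hind ⟨s, hs, rfl⟩ hμs (hGg g))]
  simp_rw [sub_mul]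

end Transport

end ProbabilityTheory

theorem transport_bias_equal_marginals_general
    {Ω : Type*} [mΩ : MeasurableSpace Ω] [StandardBorelSpace Ω]
    (μ : Measure Ω) [IsProbabilityMeasure μ]
    (gmax : ℕ)
    (S G : Ω → ℕ)
    (hSmeas : Measurable S)
    (hSpos : ∀ s, (s = 1 ∨ s = 2) → 0 < μ {ω | S ω = s})
    (hGmeas : Measurable G)
    (Ypo : ℕ → ℕ → Ω → ℝ)
    (hYpomeas : ∀ a ≤ 1, ∀ g ≤ gmax, Measurable (Ypo a g))
    (hYposq : ∀ a ≤ 1, ∀ g ≤ gmax, MemLp (Ypo a g) 2 μ)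
    (Ya : ℕ → Ω → ℝ)
    (hYa : ∀ a ω, Ya a ω = ∑ g ∈ Finset.range (gmax + 1), ind {ω' | G ω' = g} ω * Ypo a g ω)
    (mH : MeasurableSpace Ω) (hH : mH ≤ mΩ)
    (pg : ℕ → ℕ → Ω → ℝ)
    (hpg : ∀ s g, pg s g = (μ[|{ω | S ω = s}])[ind {ω | G ω = g} | mH])
    (htrans : ∀ a ≤ 1, ∀ g ≤ gmax,
      CondIndepFun mH hH (Ypo a g) (fun ω => (S ω, G ω)) μ)
    (hSH : Indep (MeasurableSpace.comap S inferInstance) mH μ)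
    (hmarg : ∀ g ≤ gmax,
      (μ[|{ω | S ω = 1}]) {ω | G ω = g} = (μ[|{ω | S ω = 2}]) {ω | G ω = g}) :
    (∫ ω, (Ya 1 ω - Ya 0 ω) ∂(μ[|{ω | S ω = 1}]))
        - ∫ ω, (Ya 1 ω - Ya 0 ω) ∂(μ[|{ω | S ω = 2}])
      = ∑ g ∈ Finset.range (gmax + 1),
          cov μ (fun ω => Ypo 1 g ω - Ypo 0 g ω) (fun ω => pg 1 g ω - pg 2 g ω) := by
  -- otherwise the later binder `mH` would be the ambient measurable space
  let _ : MeasurableSpace Ω := mΩ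
  have hS (s : ℕ) : MeasurableSet[MeasurableSpace.comap S inferInstance] {ω | S ω = s} :=
    ⟨{s}, measurableSet_singleton s, rfl⟩
  have hμS : ∀ s, (s = 1 ∨ s = 2) → μ {ω | S ω = s} ≠ 0 := fun s hs => (hSpos s hs).ne'
  have hG (g : ℕ) : MeasurableSet {ω | G ω = g} := hGmeas (measurableSet_singleton g)
  have hYpo : ∀ a ≤ 1, ∀ g ∈ Finset.range (gmax + 1), Measurable (Ypo a g) ∧
      Integrable (Ypo a g) μ ∧ CondIndepFun mH hH (Ypo a g) (fun ω => (S ω, G ω)) μ :=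
    fun a ha g hg => have hg := Finset.mem_range_succ_iff.mp hg
      ⟨hYpomeas a ha g hg, (hYposq a ha g hg).integrable one_le_two, htrans a ha g hg⟩
  have hφ : ∀ s, (s = 1 ∨ s = 2) → ∫ ω, (Ya 1 ω - Ya 0 ω) ∂μ[|{ω | S ω = s}]
      = ∑ g ∈ Finset.range (gmax + 1), ∫ ω, (Ypo 1 g ω - Ypo 0 g ω) * pg s g ω ∂μ := by
    intro s hs
    simp_rw [hYa, ind_mul_eq_indicator, ← Finset.sum_sub_distrib, hpg s, ind]
    exact integral_cond_sum_indicator_sub_eq_sum_integral_sub_mul_condExp_cond hH hSmeas hGmeas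
      hSH (measurableSet_singleton s) (hμS s hs) (hYpo 1 le_rfl) (hYpo 0 zero_le_one)
  rw [hφ 1 (.inl rfl), hφ 2 (.inr rfl), ← Finset.sum_sub_distrib]
  refine Finset.sum_congr rfl fun g hg => ?_
  have hτ := (hYpo 1 le_rfl g hg).2.1.sub (hYpo 0 zero_le_one g hg).2.1
  simp only [hpg, ind]
  refine (cov_sub_eq_integral_mul_sub_integral_mul
    (integrable_condExp_cond_of_indep hH hSH (hS 1) (hμS 1 (.inl rfl)) (hG g))
    (integrable_condExp_cond_of_indep hH hSH (hS 2) (hμS 2 (.inr rfl)) (hG g))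
    (hτ.mul_condExp_cond_of_indep hH hSH (hS 1) (hμS 1 (.inl rfl)) (hG g))
    (hτ.mul_condExp_cond_of_indep hH hSH (hS 2) (hμS 2 (.inr rfl)) (hG g)) ?_).symm
  rw [integral_condExp_cond_eq_of_indep hH hSH (hS 1) (hμS 1 (.inl rfl)) (hG g),
    integral_condExp_cond_eq_of_indep hH hSH (hS 2) (hμS 2 (.inr rfl)) (hG g),
    measureReal_def, measureReal_def, hmarg g (Finset.mem_range_succ_iff.mp hg)]

/-- **Corollary to Theorem 2, first part.**  If the marginal distribution of `G` is equal
between the two populations, i.e. `P(G=g|S=1) = P(G=g|S=2)` for all `g ∈ {0,…,g_max}`, then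
`φ₁ − φ₂ = Σ_g Cov(τ(g), υ(g))`, where `υ(g) = P(G=g|S=1,𝓗) − P(G=g|S=2,𝓗)` and the
covariance is unconditional. -/
theorem transport_bias_equal_marginals
    {Ω : Type*} [mΩ : MeasurableSpace Ω] [StandardBorelSpace Ω] [Nonempty Ω]
    (μ : Measure Ω) [IsProbabilityMeasure μ]
    (gmax : ℕ)
    (S A G : Ω → ℕ)
    (hS : ∀ ω, S ω = 1 ∨ S ω = 2) (hSmeas : Measurable S)
    (hSpos : ∀ s, (s = 1 ∨ s = 2) → 0 < μ {ω | S ω = s})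
    (hA : ∀ ω, A ω ≤ 1) (hG : ∀ ω, G ω ≤ gmax)
    (hAmeas : Measurable A) (hGmeas : Measurable G)
    (Ypo : ℕ → ℕ → Ω → ℝ)
    (hYpomeas : ∀ a ≤ 1, ∀ g ≤ gmax, Measurable (Ypo a g))
    (hYposq : ∀ a ≤ 1, ∀ g ≤ gmax, MemLp (Ypo a g) 2 μ)
    (Ya : ℕ → Ω → ℝ)
    (hYa : ∀ a ω, Ya a ω = ∑ g ∈ Finset.range (gmax + 1), ind {ω' | G ω' = g} ω * Ypo a g ω)
    (Y : Ω → ℝ)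
    (hY : ∀ ω, Y ω = ind {ω' | A ω' = 1} ω * Ya 1 ω + ind {ω' | A ω' = 0} ω * Ya 0 ω)
    (mH : MeasurableSpace Ω) (hH : mH ≤ mΩ)
    (pg : ℕ → ℕ → Ω → ℝ)
    (hpg : ∀ s g, pg s g = (μ[|{ω | S ω = s}])[ind {ω | G ω = g} | mH])
    (hpgbdd : ∀ s g, ∀ᵐ ω ∂μ, 0 ≤ pg s g ω ∧ pg s g ω ≤ 1)
    (hpgmeas : ∀ s g, Measurable[mH] (pg s g))
    (htrans : ∀ a ≤ 1, ∀ g ≤ gmax,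
      CondIndepFun mH hH (Ypo a g) (fun ω => (S ω, G ω)) μ)
    (hSH : Indep (MeasurableSpace.comap S inferInstance) mH μ)
    (hmarg : ∀ g ≤ gmax,
      (μ[|{ω | S ω = 1}]) {ω | G ω = g} = (μ[|{ω | S ω = 2}]) {ω | G ω = g}) :
    (∫ ω, (Ya 1 ω - Ya 0 ω) ∂(μ[|{ω | S ω = 1}]))
        - ∫ ω, (Ya 1 ω - Ya 0 ω) ∂(μ[|{ω | S ω = 2}])
      = ∑ g ∈ Finset.range (gmax + 1),
          cov μ (fun ω => Ypo 1 g ω - Ypo 0 g ω) (fun ω => pg 1 g ω - pg 2 g ω) :=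
  transport_bias_equal_marginals_general (mΩ := mΩ) μ gmax S G hSmeas hSpos hGmeas Ypo hYpomeas
    hYposq Ya hYa mH hH pg hpg htrans hSH hmarg
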